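/- arXiv:0811.2545 — 2 statements merged into one kernel-verified Lean document; each statement's English description precedes it below -/
import Mathlib

section
/- (Omega-limit sets of asymptotically invariant collections) Let μ be a finite Borel measure on a compact separable metric space X and f : X → X a measurable map. Let U = (U(x))_{x∈U} be an asymptotically invariant collection defined on a μ-ergodic component U, and let A ⊂ X be the attractor associated to U (the compact set with ω_f(x) = A for μ-almost every x ∈ U). Then there is a compact set A_U ⊂ A such that ω_{f,U}(x) = A_U for μ-almost every x ∈ U. Furthermore, if U has positive frequency, then there is also a compact set A_{+,U} ⊂ A_U such that ω_{+,f,U}(x) = A_{+,U} for μ-almost every x ∈ U. -/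
open Set Metric Topology Filter MeasureTheory

/-- A `μ`-ergodic component for `f`: an invariant set of positive measure all of
whose invariant subsets have zero or full relative measure.  (`μ` is not
assumed `f`-invariant.) -/
def ErgodicComponent {X : Type*} [MeasurableSpace X] (f : X → X) (μ : Measure X)
    (U : Set X) : Prop :=
  f ⁻¹' U = U ∧ 0 < μ U ∧
    ∀ V : Set X, V ⊆ U → f ⁻¹' V = V → μ V = 0 ∨ μ (U \ V) = 0

/-- The ω-limit set of the point `x` under `f`: the set of accumulation points
of the forward orbit of `x`. -/
def omegaLimitPt {X : Type*} [TopologicalSpace X] (f : X → X) (x : X) : Set X :=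
  {p | ∃ φ : ℕ → ℕ, StrictMono φ ∧ Tendsto (fun n => f^[φ n] x) atTop (𝓝 p)}

/-- A (minimal, Milnor-type) `μ`-attractor: a compact positively invariant set
whose basin `{x | ω_f(x) ⊆ A}` has positive measure, while the basin of every
compact positively invariant proper subset has zero measure. -/
def IsAttractor {X : Type*} [TopologicalSpace X] [MeasurableSpace X]
    (f : X → X) (μ : Measure X) (A : Set X) : Prop :=
  IsCompact A ∧ f '' A ⊆ A ∧ 0 < μ {x | omegaLimitPt f x ⊆ A} ∧
    ∀ A' : Set X, A' ⊂ A → IsCompact A' → f '' A' ⊆ A' →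
      μ {x | omegaLimitPt f x ⊆ A'} = 0

/-- The positive orbit of `x` under `f`. -/
def posOrbit {X : Type*} (f : X → X) (x : X) : Set X :=
  Set.range fun n : ℕ => f^[n] x

/-- An asymptotically invariant collection `𝒰 = (𝒰 x)_{x ∈ U}` of subsets of the
positive orbits: each `𝒰 x` is visited infinitely often, and `𝒰 x` and
`𝒰 (f x)` eventually agree along the orbit. -/
def AsympInvariant {X : Type*} (f : X → X) (U : Set X) (𝒰 : X → Set X) : Prop :=
  (∀ x ∈ U, 𝒰 x ⊆ posOrbit f x) ∧
  (∀ x ∈ U, {j : ℕ | f^[j] x ∈ 𝒰 x}.Infinite) ∧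
  (∀ x ∈ U, ∃ N : ℕ, ∀ n ≥ N,
    𝒰 x ∩ posOrbit f (f^[n] x) = 𝒰 (f x) ∩ posOrbit f (f^[n] x))

/-- The omega-`𝒰` limit set of `x`: accumulation points of the set `𝒰 x`
visited along the orbit. -/
def omegaU {X : Type*} [TopologicalSpace X] (f : X → X) (𝒰 : X → Set X)
    (x : X) : Set X :=
  {p | ∃ φ : ℕ → ℕ, StrictMono φ ∧ (∀ j, f^[φ j] x ∈ 𝒰 x) ∧
    Tendsto (fun j => f^[φ j] x) atTop (𝓝 p)}

/-- The set of `𝒰`-frequently visited points of the orbit of `x`: points every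
neighborhood of which is visited by `𝒰 x` with positive upper frequency. -/
noncomputable def omegaPlusU {X : Type*} [TopologicalSpace X] (f : X → X)
    (𝒰 : X → Set X) (x : X) : Set X :=
  {p | ∀ V ∈ 𝓝 p, 0 < Filter.limsup (fun n : ℕ =>
    (({j : ℕ | 1 ≤ j ∧ j ≤ n ∧ f^[j] x ∈ 𝒰 x ∩ V}.ncard : ℝ) / n)) Filter.atTop}

/-- `𝒰` has positive frequency at `x`. -/
noncomputable def PosFreq {X : Type*} (f : X → X) (𝒰 : X → Set X) (x : X) : Prop :=
  0 < Filter.limsup (fun n : ℕ =>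
    (({j : ℕ | 1 ≤ j ∧ j ≤ n ∧ f^[j] x ∈ 𝒰 x}.ncard : ℝ) / n)) Filter.atTop

/-!
Asymptotic invariance says that the times at which the orbit of `f x` is marked by `𝒰 (f x)` are,
up to finitely many exceptions, the times at which the orbit of `x` is marked by `𝒰 x`, shifted
by one. Being infinite and having positive upper density are insensitive to such changes, so
`x ↦ ω_{f,𝒰}(x)` and `x ↦ ω_{+,f,𝒰}(x)` are closed-valued maps that are constant along orbits
in `U`. Such a map is a.e. constant on an ergodic component: for each basic open set `O` of a
countable basis, the points whose value meets `O` form an invariant set, hence a null or conull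
one, and a closed set is determined by the basic open sets it meets.
-/

open Set Filter Topology MeasureTheory TopologicalSpace

section UpperDensity

noncomputable def countIcc (S : Set ℕ) (n : ℕ) : ℕ := {j | 1 ≤ j ∧ j ≤ n ∧ j ∈ S}.ncard

def PosUpperDensity (S : Set ℕ) : Prop :=
  0 < limsup (fun n : ℕ => (countIcc S n : ℝ) / n) atTop

variable {S T : Set ℕ}

theorem finite_setOf_mem_Icc (S : Set ℕ) (n : ℕ) : {j | 1 ≤ j ∧ j ≤ n ∧ j ∈ S}.Finite :=
  (finite_Icc 1 n).subset fun _ hj => ⟨hj.1, hj.2.1⟩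

theorem countIcc_le_self (S : Set ℕ) (n : ℕ) : countIcc S n ≤ n :=
  calc countIcc S n ≤ (Icc 1 n).ncard := ncard_le_ncard (fun _ hj => ⟨hj.1, hj.2.1⟩)
    _ = n := by simp [← Nat.card_coe_set_eq]

theorem countIcc_le_add_of_subset_union {N : ℕ} (h : S ⊆ T ∪ Iio N) (n : ℕ) :
    countIcc S n ≤ countIcc T n + N :=
  calc countIcc S n ≤ ({j | 1 ≤ j ∧ j ≤ n ∧ j ∈ T} ∪ (Finset.range N : Set ℕ)).ncard := by
        refine ncard_le_ncard (fun j ⟨hj1, hjn, hjS⟩ => ?_)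
          ((finite_setOf_mem_Icc T n).union (Finset.finite_toSet _))
        rcases h hjS with hjT | hjN
        · exact Or.inl ⟨hj1, hjn, hjT⟩
        · exact Or.inr (by simpa using hjN)
    _ ≤ countIcc T n + N :=
        (ncard_union_le _ _).trans_eq (by rw [ncard_coe_finset, Finset.card_range]; rfl)

theorem exists_countIcc_le_add_of_eventuallyEq (h : S =ᶠ[atTop] T) :
    ∃ C, ∀ n, countIcc S n ≤ countIcc T n + C := by
  obtain ⟨N, hN⟩ := eventually_atTop.1 h
  refine ⟨N, countIcc_le_add_of_subset_union fun j hj => ?_⟩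
  by_cases hjN : N ≤ j
  · exact Or.inl (cast (hN j hjN) hj)
  · exact Or.inr (not_le.1 hjN)

theorem countIcc_preimage_succ_le (S : Set ℕ) (n : ℕ) :
    countIcc ((· + 1) ⁻¹' S) n ≤ countIcc S n + 1 :=
  calc countIcc ((· + 1) ⁻¹' S) n ≤ ({j | 1 ≤ j ∧ j ≤ n ∧ j ∈ S} ∪ {n + 1}).ncard := by
        refine ncard_le_ncard_of_injOn (· + 1) (fun j ⟨hj1, hjn, hjS⟩ => ?_)
          (add_left_injective 1).injOn ((finite_setOf_mem_Icc S n).union (finite_singleton _))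
        rcases hjn.lt_or_eq with hjn | rfl
        · exact Or.inl ⟨by omega, hjn, hjS⟩
        · exact Or.inr rfl
    _ ≤ countIcc S n + 1 := (ncard_union_le _ _).trans_eq (by rw [ncard_singleton]; rfl)

theorem countIcc_le_preimage_succ (S : Set ℕ) (n : ℕ) :
    countIcc S n ≤ countIcc ((· + 1) ⁻¹' S) n + 1 :=
  calc countIcc S n ≤ ({j | 1 ≤ j ∧ j ≤ n ∧ j + 1 ∈ S} ∪ {0}).ncard := by
        refine ncard_le_ncard_of_injOn (· - 1) (fun j ⟨hj1, hjn, hjS⟩ => ?_)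
          (fun i hi j hj hij => by have := hi.1; have := hj.1; simp only at hij; omega)
          ((finite_setOf_mem_Icc _ n).union (finite_singleton _))
        rcases hj1.lt_or_eq with hj1 | rfl
        · exact Or.inl ⟨by omega, by omega, by rwa [Nat.sub_add_cancel hj1.le]⟩
        · exact Or.inr rfl
    _ ≤ countIcc ((· + 1) ⁻¹' S) n + 1 := (ncard_union_le _ _).trans_eq (by rw [ncard_singleton]; rfl)

theorem posUpperDensity_iff :
    PosUpperDensity S ↔ ∃ ε > 0, ∃ᶠ n in atTop, ε ≤ (countIcc S n : ℝ) / n := by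
  have hbdd : IsBoundedUnder (· ≤ ·) atTop fun n : ℕ => (countIcc S n : ℝ) / n :=
    isBoundedUnder_of ⟨1, fun n => div_le_one_of_le₀ (by exact_mod_cast countIcc_le_self S n)
      n.cast_nonneg⟩
  have hcobdd : IsCoboundedUnder (· ≤ ·) atTop fun n : ℕ => (countIcc S n : ℝ) / n :=
    (isBoundedUnder_of ⟨0, fun n => by positivity⟩).isCoboundedUnder_le
  constructor
  · intro h
    exact ⟨_, half_pos h, (frequently_lt_of_lt_limsup hcobdd (half_lt_self h)).mono
      fun _ => le_of_lt⟩
  · rintro ⟨ε, hε, hfreq⟩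
    exact hε.trans_le (le_limsup_of_frequently_le hfreq hbdd)

theorem PosUpperDensity.of_countIcc_le_add {C : ℕ} (hS : PosUpperDensity S)
    (h : ∀ n, countIcc S n ≤ countIcc T n + C) : PosUpperDensity T := by
  obtain ⟨ε, hε, hfreq⟩ := posUpperDensity_iff.1 hS
  have hsmall : ∀ᶠ n : ℕ in atTop, (C : ℝ) / n < ε / 2 :=
    (tendsto_const_div_atTop_nhds_zero_nat (C : ℝ)).eventually (gt_mem_nhds (half_pos hε))
  refine posUpperDensity_iff.2 ⟨ε / 2, half_pos hε, (hfreq.and_eventually hsmall).mono ?_⟩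
  rintro n ⟨hεS, hC⟩
  have hST : (countIcc S n : ℝ) / n ≤ countIcc T n / n + C / n := by
    rw [← add_div]
    gcongr
    exact_mod_cast h n
  linarith

theorem not_posUpperDensity_empty : ¬ PosUpperDensity ∅ := by
  simp [PosUpperDensity, countIcc]

theorem PosUpperDensity.infinite (h : PosUpperDensity S) : S.Infinite := fun hfin =>
  not_posUpperDensity_empty <| h.of_countIcc_le_add (C := S.ncard) fun _ => by
    simpa [countIcc] using ncard_le_ncard (fun _ hj => hj.2.2) hfin

theorem posUpperDensity_iff_of_eventuallyEq_preimage_succ (h : T =ᶠ[atTop] (· + 1) ⁻¹' S) :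
    PosUpperDensity T ↔ PosUpperDensity S := by
  obtain ⟨C₁, hC₁⟩ := exists_countIcc_le_add_of_eventuallyEq h
  obtain ⟨C₂, hC₂⟩ := exists_countIcc_le_add_of_eventuallyEq h.symm
  constructor
  · refine fun hT => hT.of_countIcc_le_add (C := C₁ + 1) fun n => ?_
    have := countIcc_preimage_succ_le S n
    linarith [hC₁ n]
  · refine fun hS => hS.of_countIcc_le_add (C := C₂ + 1) fun n => ?_
    have := countIcc_le_preimage_succ S n
    linarith [hC₂ n]

theorem infinite_iff_of_eventuallyEq_preimage_succ (h : T =ᶠ[atTop] (· + 1) ⁻¹' S) :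
    T.Infinite ↔ S.Infinite :=
  calc T.Infinite ↔ ∃ᶠ n in atTop, n ∈ T := Nat.frequently_atTop_iff_infinite.symm
    _ ↔ ∃ᶠ n in atTop, n + 1 ∈ S := frequently_congr (h.mono fun _ => Iff.of_eq)
    _ ↔ ∃ᶠ n in map (· + 1) atTop, n ∈ S := frequently_map.symm
    _ ↔ S.Infinite := by rw [map_add_atTop_eq_nat]; exact Nat.frequently_atTop_iff_infinite

end UpperDensity

theorem isClosed_setOf_forall_mem_nhds {X : Type*} [TopologicalSpace X] (P : Set X → Prop) :
    IsClosed {p | ∀ V ∈ 𝓝 p, P V} := by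
  refine isOpen_compl_iff.1 (isOpen_iff_mem_nhds.2 fun p hp => ?_)
  obtain ⟨V, hV, hPV⟩ : ∃ V ∈ 𝓝 p, ¬ P V := by simpa using hp
  filter_upwards [eventually_mem_nhds_iff.2 hV] with q hq hcontra using hPV (hcontra V hq)

section Orbit

variable {X : Type*} {f : X → X} {𝒰 : X → Set X}

variable (f 𝒰) in
def visitTimes (x : X) (V : Set X) : Set ℕ := {j | f^[j] x ∈ 𝒰 x ∩ V}

theorem visitTimes_apply_eventuallyEq {x : X} {N : ℕ}
    (hN : 𝒰 x ∩ posOrbit f (f^[N] x) = 𝒰 (f x) ∩ posOrbit f (f^[N] x)) (V : Set X) :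
    visitTimes f 𝒰 (f x) V =ᶠ[atTop] (· + 1) ⁻¹' visitTimes f 𝒰 x V := by
  filter_upwards [eventually_ge_atTop N] with j hj
  have horb : f^[j + 1] x ∈ posOrbit f (f^[N] x) :=
    ⟨j + 1 - N, by
      change f^[j + 1 - N] (f^[N] x) = _
      rw [← Function.iterate_add_apply, Nat.sub_add_cancel (by omega)]⟩
  have hmem : f^[j + 1] x ∈ 𝒰 (f x) ↔ f^[j + 1] x ∈ 𝒰 x :=
    ⟨fun h => ((Set.ext_iff.1 hN _).2 ⟨h, horb⟩).1, fun h => ((Set.ext_iff.1 hN _).1 ⟨h, horb⟩).1⟩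
  apply propext
  change f^[j] (f x) ∈ 𝒰 (f x) ∩ V ↔ f^[j + 1] x ∈ 𝒰 x ∩ V
  rw [← Function.iterate_succ_apply, mem_inter_iff, mem_inter_iff, hmem]

variable [TopologicalSpace X]

theorem omegaU_subset_omegaLimitPt (x : X) : omegaU f 𝒰 x ⊆ omegaLimitPt f x :=
  fun _ ⟨φ, hφ, _, hlim⟩ => ⟨φ, hφ, hlim⟩

theorem omegaU_eq [FirstCountableTopology X] (x : X) :
    omegaU f 𝒰 x = {p | ∀ V ∈ 𝓝 p, (visitTimes f 𝒰 x V).Infinite} := by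
  ext p
  constructor
  · rintro ⟨φ, hφ, h𝒰, hlim⟩ V hV
    refine Nat.frequently_atTop_iff_infinite.1 (hφ.tendsto_atTop.frequently ?_)
    exact ((hlim.eventually hV).mono fun j hj => ⟨h𝒰 j, hj⟩).frequently
  · intro h
    obtain ⟨s, hs⟩ := (𝓝 p).exists_antitone_basis
    obtain ⟨φ, hφ, hmem⟩ := extraction_forall_of_frequently fun k =>
      Nat.frequently_atTop_iff_infinite.2 (h (s k) (hs.mem k))
    exact ⟨φ, hφ, fun k => (hmem k).1, hs.tendsto fun k => (hmem k).2⟩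

theorem omegaPlusU_eq (x : X) :
    omegaPlusU f 𝒰 x = {p | ∀ V ∈ 𝓝 p, PosUpperDensity (visitTimes f 𝒰 x V)} :=
  rfl

theorem isClosed_omegaU [FirstCountableTopology X] (x : X) : IsClosed (omegaU f 𝒰 x) := by
  rw [omegaU_eq]
  exact isClosed_setOf_forall_mem_nhds _

theorem isClosed_omegaPlusU (x : X) : IsClosed (omegaPlusU f 𝒰 x) :=
  isClosed_setOf_forall_mem_nhds _

theorem omegaPlusU_subset_omegaU [FirstCountableTopology X] (x : X) :
    omegaPlusU f 𝒰 x ⊆ omegaU f 𝒰 x := by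
  rw [omegaPlusU_eq, omegaU_eq]
  exact fun p hp V hV => (hp V hV).infinite

theorem omegaU_apply_eq [FirstCountableTopology X] {x : X} {N : ℕ}
    (hN : 𝒰 x ∩ posOrbit f (f^[N] x) = 𝒰 (f x) ∩ posOrbit f (f^[N] x)) :
    omegaU f 𝒰 (f x) = omegaU f 𝒰 x := by
  simp only [omegaU_eq,
    infinite_iff_of_eventuallyEq_preimage_succ (visitTimes_apply_eventuallyEq hN _)]

theorem omegaPlusU_apply_eq {x : X} {N : ℕ}
    (hN : 𝒰 x ∩ posOrbit f (f^[N] x) = 𝒰 (f x) ∩ posOrbit f (f^[N] x)) :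
    omegaPlusU f 𝒰 (f x) = omegaPlusU f 𝒰 x := by
  simp only [omegaPlusU_eq,
    posUpperDensity_iff_of_eventuallyEq_preimage_succ (visitTimes_apply_eventuallyEq hN _)]

theorem AsympInvariant.omegaU_apply [FirstCountableTopology X] {U : Set X}
    (h : AsympInvariant f U 𝒰) {x : X} (hx : x ∈ U) : omegaU f 𝒰 (f x) = omegaU f 𝒰 x :=
  let ⟨N, hN⟩ := h.2.2 x hx
  omegaU_apply_eq (hN N le_rfl)

theorem AsympInvariant.omegaPlusU_apply {U : Set X} (h : AsympInvariant f U 𝒰) {x : X}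
    (hx : x ∈ U) : omegaPlusU f 𝒰 (f x) = omegaPlusU f 𝒰 x :=
  let ⟨N, hN⟩ := h.2.2 x hx
  omegaPlusU_apply_eq (hN N le_rfl)

end Orbit

section Ergodic

variable {X : Type*} [MeasurableSpace X] {f : X → X} {μ : Measure X} {U : Set X}

theorem ErgodicComponent.ae_mem_iff (hU : ErgodicComponent f μ U) {W : Set X} (hWU : W ⊆ U)
    (hW : f ⁻¹' W = W) : ∀ᵐ x ∂μ, x ∈ U → (x ∈ W ↔ μ (U \ W) = 0) := by
  by_cases h : μ (U \ W) = 0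
  · filter_upwards [measure_eq_zero_iff_ae_notMem.1 h] with x hx hxU
    simpa [h] using fun hxW => hx ⟨hxU, hxW⟩
  · have hW0 : μ W = 0 := (hU.2.2 W hWU hW).resolve_right h
    filter_upwards [measure_eq_zero_iff_ae_notMem.1 hW0] with x hx _
    simp [hx, h]

theorem ErgodicComponent.exists_ae_eq [TopologicalSpace X] [SecondCountableTopology X]
    (hU : ErgodicComponent f μ U) {g : X → Set X} (hg : ∀ x ∈ U, IsClosed (g x))
    (hgf : ∀ x ∈ U, g (f x) = g x) : ∃ S : Set X, ∀ᵐ x ∂μ, x ∈ U → g x = S := by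
  let W : Set X → Set X := fun o => {x | x ∈ U ∧ (o ∩ g x).Nonempty}
  have hW : ∀ o, f ⁻¹' W o = W o := by
    intro o
    ext x
    have hfx : f x ∈ U ↔ x ∈ U := by rw [← mem_preimage, hU.1]
    constructor
    · rintro ⟨hfxU, hne⟩
      exact ⟨hfx.1 hfxU, hgf x (hfx.1 hfxU) ▸ hne⟩
    · rintro ⟨hxU, hne⟩
      exact ⟨hfx.2 hxU, (hgf x hxU).symm ▸ hne⟩
  have hae : ∀ᵐ x ∂μ, ∀ o ∈ countableBasis X, x ∈ U → (x ∈ W o ↔ μ (U \ W o) = 0) :=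
    (ae_ball_iff (countable_countableBasis X)).2 fun o _ =>
      hU.ae_mem_iff (fun _ hx => hx.1) (hW o)
  refine ⟨{p | ∀ o ∈ countableBasis X, p ∈ o → μ (U \ W o) = 0}, ?_⟩
  filter_upwards [hae] with x hx hxU
  ext p
  rw [← (hg x hxU).closure_eq, (isBasis_countableBasis X).mem_closure_iff]
  exact forall₂_congr fun o ho =>
    imp_congr_right fun _ => (and_iff_right hxU).symm.trans (hx o ho hxU)

end Ergodic

theorem omega_limit_of_asymp_invariant_general
    {X : Type*} [MetricSpace X] [CompactSpace X]
    [MeasurableSpace X]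
    (f : X → X) (μ : Measure X)
    (U : Set X) (hU : ErgodicComponent f μ U)
    (𝒰 : X → Set X) (h𝒰 : AsympInvariant f U 𝒰)
    (A : Set X)
    (hAeq : ∀ᵐ x ∂μ, x ∈ U → omegaLimitPt f x = A) :
    ∃ AU : Set X, IsCompact AU ∧ AU ⊆ A ∧
      (∀ᵐ x ∂μ, x ∈ U → omegaU f 𝒰 x = AU) ∧
      ((∀ x ∈ U, PosFreq f 𝒰 x) →
        ∃ AP : Set X, IsCompact AP ∧ AP ⊆ AU ∧
          ∀ᵐ x ∂μ, x ∈ U → omegaPlusU f 𝒰 x = AP) := by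
  obtain ⟨AU, hAU⟩ := hU.exists_ae_eq (fun x _ => isClosed_omegaU x)
    fun x hx => h𝒰.omegaU_apply hx
  obtain ⟨AP, hAP⟩ := hU.exists_ae_eq (fun x _ => isClosed_omegaPlusU x)
    fun x hx => h𝒰.omegaPlusU_apply hx
  obtain ⟨x, hxU, hxAU, hxAP, hxA⟩ := Measure.exists_mem_of_measure_ne_zero_of_ae hU.2.1.ne'
    (ae_restrict_of_ae (hAU.and (hAP.and hAeq)))
  obtain rfl := hxAU hxU
  obtain rfl := hxAP hxU
  exact ⟨_, (isClosed_omegaU x).isCompact, hxA hxU ▸ omegaU_subset_omegaLimitPt x, hAU,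
    fun _ => ⟨_, (isClosed_omegaPlusU x).isCompact, omegaPlusU_subset_omegaU x, hAP⟩⟩

/-- **Omega-limit sets of asymptotically invariant collections.** Let `𝒰` be an
asymptotically invariant collection on a `μ`-ergodic component `U` and let `A`
be the attractor associated to `U`.  Then there is a compact `A_𝒰 ⊆ A` with
`ω_{f,𝒰}(x) = A_𝒰` for `μ`-a.e. `x ∈ U`; and if `𝒰` has positive frequency,
there is also a compact `A_{+,𝒰} ⊆ A_𝒰` with `ω_{+,f,𝒰}(x) = A_{+,𝒰}` for
`μ`-a.e. `x ∈ U`. -/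
theorem omega_limit_of_asymp_invariant
    {X : Type*} [MetricSpace X] [CompactSpace X] [TopologicalSpace.SeparableSpace X]
    [MeasurableSpace X] [BorelSpace X]
    (f : X → X) (hf : Measurable f) (μ : Measure X) [IsFiniteMeasure μ]
    (U : Set X) (hU : ErgodicComponent f μ U)
    (𝒰 : X → Set X) (h𝒰 : AsympInvariant f U 𝒰)
    (A : Set X) (hA : IsAttractor f μ A)
    (hAeq : ∀ᵐ x ∂μ, x ∈ U → omegaLimitPt f x = A) :
    ∃ AU : Set X, IsCompact AU ∧ AU ⊆ A ∧
      (∀ᵐ x ∂μ, x ∈ U → omegaU f 𝒰 x = AU) ∧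
      ((∀ x ∈ U, PosFreq f 𝒰 x) →
        ∃ AP : Set X, IsCompact AP ∧ AP ⊆ AU ∧
          ∀ᵐ x ∂μ, x ∈ U → omegaPlusU f 𝒰 x = AP) :=
  omega_limit_of_asymp_invariant_general f μ U hU 𝒰 h𝒰 A hAeq
end

section
/- (Counting lemma for induced times) Let X be a set and f : X → X a map. Let {G_j}_{j∈ℕ} be a collection of subsets of X such that f^j(x) ∈ G_{n−j} for all 0 ≤ j < n and all x ∈ G_n. Let B ⊂ X and let x ∈ B be a point such that #{j ≥ 0 : x ∈ G_j and f^j(x) ∈ B} = ∞. Let T : O^+(x) ∩ B → O^+(x) ∩ B be a map given by T(y) = f^{g(y)}(y), where 1 ≤ g(y) ≤ min{j ≥ 1 : y ∈ G_j and f^j(y) ∈ B}. Then for every n, #{1 ≤ j ≤ n : x ∈ G_j and f^j(x) ∈ B} ≤ #{j ≥ 0 : ∑_{k=0}^{j} g(T^k(x)) ≤ n}. Moreover, if limsup_n (1/n) #{1 ≤ j ≤ n : x ∈ G_j and f^j(x) ∈ B} > Θ > 0, then liminf_n (1/n) ∑_{j=0}^{n−1} g(T^j(x)) ≤ Θ^{-1}.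 -/
open Set Filter

/-- The map `T(y) = f^[g y] y`. -/
def indMap {X : Type*} (f : X → X) (g : X → ℕ) : X → X :=
  fun y => f^[g y] y

/-- **Counting lemma for induced times.** Let `{G_j}` satisfy
`f^j(G_n) ⊆ G_{n-j}` for `j < n`, let `x ∈ B` be a point with infinitely many
`j` such that `x ∈ G_j` and `f^j(x) ∈ B`, and let `T(y) = f^[g y] y` map
`O⁺(x) ∩ B` to itself, with `1 ≤ g(y) ≤ min {j ≥ 1 | y ∈ G_j ∧ f^j(y) ∈ B}`.
Then `#{1 ≤ j ≤ n | x ∈ G_j, f^j(x) ∈ B} ≤ #{j | ∑_{k ≤ j} g(T^k x) ≤ n}`, and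
if the left-hand frequencies have `limsup > Θ > 0` then
`liminf (1/n) ∑_{j<n} g(T^j x) ≤ Θ⁻¹`. -/
theorem counting_lemma_for_induced_times
    {X : Type*} (f : X → X) (G : ℕ → Set X)
    (hG : ∀ n : ℕ, ∀ x ∈ G n, ∀ j < n, f^[j] x ∈ G (n - j))
    (B : Set X) (x : X) (hx : x ∈ B)
    (hinf : {j : ℕ | x ∈ G j ∧ f^[j] x ∈ B}.Infinite)
    (g : X → ℕ)
    (hg1 : ∀ y ∈ posOrbit f x ∩ B, 1 ≤ g y)
    (hgmin : ∀ y ∈ posOrbit f x ∩ B, ∀ j : ℕ, 1 ≤ j → y ∈ G j → f^[j] y ∈ B → g y ≤ j)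
    (hT : ∀ y ∈ posOrbit f x ∩ B, indMap f g y ∈ posOrbit f x ∩ B) :
    (∀ n : ℕ,
      {j : ℕ | 1 ≤ j ∧ j ≤ n ∧ x ∈ G j ∧ f^[j] x ∈ B}.ncard ≤
      {j : ℕ | ∑ k ∈ Finset.range (j + 1), g ((indMap f g)^[k] x) ≤ n}.ncard) ∧
    (∀ Θ : ℝ, 0 < Θ →
      Θ < Filter.limsup (fun n : ℕ =>
        (({j : ℕ | 1 ≤ j ∧ j ≤ n ∧ x ∈ G j ∧ f^[j] x ∈ B}.ncard : ℝ) / n)) Filter.atTop →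
      Filter.liminf (fun n : ℕ =>
        (∑ j ∈ Finset.range n, (g ((indMap f g)^[j] x) : ℝ)) / n) Filter.atTop ≤ Θ⁻¹) := by
  classical
  set T := indMap f g with hTdef
  set σ : ℕ → ℕ := fun k => ∑ i ∈ Finset.range k, g (T^[i] x) with hσ
  have horb : ∀ k, T^[k] x ∈ posOrbit f x ∩ B := by
    intro k
    induction k with
    | zero => exact ⟨⟨0, rfl⟩, hx⟩
    | succ k ih =>
      rw [Function.iterate_succ_apply']
      exact hT _ ih
  have hσsucc : ∀ k, σ (k + 1) = σ k + g (T^[k] x) := by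
    intro k; simp [hσ, Finset.sum_range_succ]
  have hσmono : StrictMono σ := by
    apply strictMono_nat_of_lt_succ
    intro k
    have := hg1 _ (horb k)
    rw [hσsucc k]; omega
  have hσle : ∀ m, m ≤ σ m := by
    intro m
    induction m with
    | zero => simp
    | succ m ih =>
      have := hg1 _ (horb m)
      rw [hσsucc m]; omega
  -- key structural lemma
  have key : ∀ j : ℕ, ∀ k : ℕ, 1 ≤ j → T^[k] x ∈ G j → f^[j] (T^[k] x) ∈ B →
      ∃ m, 1 ≤ m ∧ σ (k + m) = σ k + j := by
    intro j
    induction j using Nat.strong_induction_on with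
    | _ j ih =>
      intro k hj1 hGj hB'
      have hy := horb k
      have hgle : g (T^[k] x) ≤ j := hgmin _ hy j hj1 hGj hB'
      rcases eq_or_lt_of_le hgle with heq | hlt
      · exact ⟨1, le_refl 1, by rw [hσsucc k, heq]⟩
      · have hTy : T^[k+1] x ∈ G (j - g (T^[k] x)) := by
          rw [Function.iterate_succ_apply']
          exact hG j _ hGj (g (T^[k] x)) hlt
        have hB2 : f^[j - g (T^[k] x)] (T^[k+1] x) ∈ B := by
          rw [Function.iterate_succ_apply']
          show f^[j - g (T^[k] x)] (f^[g (T^[k] x)] (T^[k] x)) ∈ B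
          rw [← Function.iterate_add_apply, Nat.sub_add_cancel hgle]
          exact hB'
        have hgpos : 1 ≤ g (T^[k] x) := hg1 _ (horb k)
        obtain ⟨m, hm1, hm⟩ := ih (j - g (T^[k] x)) (by omega) (k + 1) (by omega) hTy hB2
        refine ⟨m + 1, by omega, ?_⟩
        have hs := hσsucc k
        rw [show k + (m + 1) = k + 1 + m by omega, hm]
        have hcancel : g (T^[k] x) + (j - g (T^[k] x)) = j := Nat.add_sub_cancel' hgle
        omega
  have part1 : ∀ n : ℕ,
      {j : ℕ | 1 ≤ j ∧ j ≤ n ∧ x ∈ G j ∧ f^[j] x ∈ B}.ncard ≤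
      {j : ℕ | ∑ k ∈ Finset.range (j + 1), g (T^[k] x) ≤ n}.ncard := by
    intro n
    have hset : {j : ℕ | ∑ k ∈ Finset.range (j + 1), g (T^[k] x) ≤ n} =
        {m : ℕ | σ (m + 1) ≤ n} := rfl
    rw [hset]
    have hfin : {m : ℕ | σ (m + 1) ≤ n}.Finite := by
      apply Set.Finite.subset (Set.finite_Iic n)
      intro m hm
      simp only [Set.mem_setOf_eq] at hm
      have := hσle (m + 1)
      simp only [Set.mem_Iic]
      omega
    have hsub : {j : ℕ | 1 ≤ j ∧ j ≤ n ∧ x ∈ G j ∧ f^[j] x ∈ B} ⊆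
        (fun m => σ (m + 1)) '' {m : ℕ | σ (m + 1) ≤ n} := by
      rintro j ⟨hj1, hjn, hGj, hBj⟩
      obtain ⟨m, hm1, hm⟩ := key j 0 hj1 (by simpa using hGj) (by simpa using hBj)
      have hσ0 : σ 0 = 0 := by simp [hσ]
      rw [hσ0, Nat.zero_add, Nat.zero_add] at hm
      refine ⟨m - 1, ?_, ?_⟩
      · show σ (m - 1 + 1) ≤ n
        rw [show m - 1 + 1 = m by omega, hm]; exact hjn
      · show σ (m - 1 + 1) = j
        rw [show m - 1 + 1 = m by omega, hm]
    calc {j : ℕ | 1 ≤ j ∧ j ≤ n ∧ x ∈ G j ∧ f^[j] x ∈ B}.ncard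
        ≤ ((fun m => σ (m + 1)) '' {m : ℕ | σ (m + 1) ≤ n}).ncard :=
          Set.ncard_le_ncard hsub (hfin.image _)
      _ ≤ {m : ℕ | σ (m + 1) ≤ n}.ncard := Set.ncard_image_le hfin
  refine ⟨part1, ?_⟩
  intro Θ hΘ hlim
  set a : ℕ → ℕ := fun n => {j : ℕ | 1 ≤ j ∧ j ≤ n ∧ x ∈ G j ∧ f^[j] x ∈ B}.ncard with ha
  set A : ℕ → ℕ := fun n => {m : ℕ | σ (m + 1) ≤ n}.ncard with hA
  have haA : ∀ n, a n ≤ A n := part1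
  have hσA : ∀ n, 1 ≤ A n → σ (A n) ≤ n := by
    intro n hA1
    by_contra h
    push_neg at h
    have hsub : {m : ℕ | σ (m + 1) ≤ n} ⊆ Set.Iio (A n - 1) := by
      intro m hm
      simp only [Set.mem_setOf_eq] at hm
      simp only [Set.mem_Iio]
      by_contra hm'
      push_neg at hm'
      have : σ (A n) ≤ σ (m + 1) := hσmono.monotone (by omega)
      omega
    have hle := Set.ncard_le_ncard hsub (Set.finite_Iio _)
    have : (Set.Iio (A n - 1)).ncard = A n - 1 := by
      rw [← Finset.coe_Iio, Set.ncard_coe_finset, Nat.card_Iio]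
    rw [this] at hle
    have : A n ≤ A n - 1 := hle
    omega
  -- frequently Θ < a n / n
  have hcob : Filter.IsCoboundedUnder (· ≤ ·) Filter.atTop
      (fun n : ℕ => ((a n : ℝ) / n)) := by
    apply Filter.IsBoundedUnder.isCoboundedUnder_le (l := Filter.atTop)
    exact Filter.isBoundedUnder_of
      ⟨0, fun n => div_nonneg (Nat.cast_nonneg _) (Nat.cast_nonneg _)⟩
  have hfreq : ∃ᶠ n in Filter.atTop, Θ < (a n : ℝ) / n :=
    Filter.frequently_lt_of_lt_limsup hcob hlim
  have hle : ∀ N : ℕ, ∃ m ≥ N, (σ m : ℝ) / m ≤ Θ⁻¹ := by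
    intro N
    obtain ⟨n0, hn0⟩ := exists_nat_ge ((N : ℝ) / Θ)
    have hn0' : (N : ℝ) ≤ Θ * n0 := by
      rw [div_le_iff₀ hΘ] at hn0; linarith
    obtain ⟨n, hn, hΘn⟩ := Filter.frequently_atTop.1 hfreq n0
    have hnpos : 0 < n := by
      by_contra h
      push_neg at h
      interval_cases n
      simp at hΘn
      linarith
    have han : Θ * n < a n := by
      rw [lt_div_iff₀ (by positivity)] at hΘn
      linarith
    have hMpos : Θ * n < (A n : ℝ) := lt_of_lt_of_le han (by exact_mod_cast haA n)
    have hA1 : 1 ≤ A n := by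
      rcases Nat.eq_zero_or_pos (A n) with h | h
      · exfalso
        rw [h] at hMpos
        have hnR : (0 : ℝ) < n := by exact_mod_cast hnpos
        simp only [Nat.cast_zero] at hMpos
        nlinarith
      · exact h
    have hσM := hσA n hA1
    have hNM : (N : ℝ) < A n := by
      calc (N : ℝ) ≤ Θ * n0 := hn0'
        _ ≤ Θ * n := by
            apply mul_le_mul_of_nonneg_left _ (le_of_lt hΘ)
            exact_mod_cast hn
        _ < A n := hMpos
    refine ⟨A n, ?_, ?_⟩
    · exact_mod_cast le_of_lt hNM
    · have hApos : (0 : ℝ) < A n := by exact_mod_cast hA1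
      rw [div_le_iff₀ hApos]
      have h1 : (σ (A n) : ℝ) ≤ n := by exact_mod_cast hσM
      have h2 : (n : ℝ) < Θ⁻¹ * A n := by
        rw [lt_inv_mul_iff₀ hΘ]
        linarith
      linarith
  have hbdd : Filter.IsBoundedUnder (· ≥ ·) Filter.atTop
      (fun n : ℕ => (∑ j ∈ Finset.range n, (g (T^[j] x) : ℝ)) / n) :=
    Filter.isBoundedUnder_of ⟨0, fun n =>
      div_nonneg (Finset.sum_nonneg fun _ _ => Nat.cast_nonneg _) (Nat.cast_nonneg _)⟩
  apply Filter.liminf_le_of_frequently_le _ hbdd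
  rw [Filter.frequently_atTop]
  intro N
  obtain ⟨m, hmN, hm⟩ := hle N
  refine ⟨m, hmN, ?_⟩
  have hcast : (∑ j ∈ Finset.range m, (g (T^[j] x) : ℝ)) = (σ m : ℝ) := by
    rw [hσ]; push_cast; ring
  rw [hcast]
  exact hm
end
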